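/- arXiv:2305.06986 — 3 statements merged into one kernel-verified Lean document; each statement's English description precedes it below -/
import Mathlib

section
/- Let a be uniform on {-1,1} and b ~ N(0,1). There exists a function v(a,b) supported on {-1,1} × [0,2] with sup|v| bounded by an absolute constant, such that for every x with |x| ≤ 1, E_{a,b}[v(a,b) · ReLU(a·x + b)] = 1. -/
open MeasureTheory ProbabilityTheory Real
open scoped ENNReal NNReal

noncomputable def vv (b : ℝ) : ℝ :=
  if b ∈ Set.Icc (1:ℝ) 2 then (2/3) / gaussianPDFReal 0 1 b else 0

lemma vv_integral (x : ℝ) (hx : |x| ≤ 1) :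
    (∫ b, (vv b * max (x + b) 0 + vv b * max (-x + b) 0) / 2
      ∂(gaussianReal 0 1)) = 1 := by
  have hpdf : ∀ b, 0 < gaussianPDFReal 0 1 b := fun b => gaussianPDFReal_pos 0 1 b one_ne_zero
  rw [gaussianReal_of_var_ne_zero 0 one_ne_zero]
  have : gaussianPDF 0 1 = fun b => ((gaussianPDFReal 0 1 b).toNNReal : ℝ≥0∞) := rfl
  rw [this, integral_withDensity_eq_integral_smul
    ((measurable_gaussianPDFReal 0 1).real_toNNReal)]
  have hx1 := abs_le.mp hx
  have heq : (fun b => (gaussianPDFReal 0 1 b).toNNReal •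
      ((vv b * max (x + b) 0 + vv b * max (-x + b) 0) / 2)) =
      Set.indicator (Set.Icc (1:ℝ) 2) (fun b => (2/3) * b) := by
    funext b
    simp only [NNReal.smul_def, smul_eq_mul, Real.coe_toNNReal _ (hpdf b).le, Set.indicator]
    by_cases hb : b ∈ Set.Icc (1:ℝ) 2
    · simp only [hb, if_pos, vv]
      have hb1 := hb.1
      have h1 : max (x + b) 0 = x + b := max_eq_left (by linarith)
      have h2 : max (-x + b) 0 = -x + b := max_eq_left (by linarith)
      rw [h1, h2]
      field_simp
      rw [div_eq_iff (by have := hpdf b; positivity)]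
      ring
    · simp [vv, hb]
  rw [heq, integral_indicator measurableSet_Icc]
  rw [integral_Icc_eq_integral_Ioc, ← intervalIntegral.integral_of_le (by norm_num : (1:ℝ) ≤ 2)]
  rw [intervalIntegral.integral_const_mul, integral_id]
  norm_num

lemma vv_bound (b : ℝ) : |vv b| ≤ (2/3) * Real.sqrt (2*π) * Real.exp 2 := by
  have hpi : (0:ℝ) < 2*π := by positivity
  have hs : (0:ℝ) < Real.sqrt (2*π) := Real.sqrt_pos.mpr hpi
  unfold vv
  by_cases hb : b ∈ Set.Icc (1:ℝ) 2
  · rw [if_pos hb]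
    have hpdf := gaussianPDFReal_pos 0 1 b one_ne_zero
    rw [abs_of_nonneg (by positivity)]
    rw [div_le_iff₀ hpdf]
    have hpdfval : gaussianPDFReal 0 1 b = (Real.sqrt (2*π))⁻¹ * Real.exp (-(b^2)/2) := by
      simp [gaussianPDFReal]
    rw [hpdfval]
    have : (2/3) * Real.sqrt (2*π) * Real.exp 2 * ((Real.sqrt (2*π))⁻¹ * Real.exp (-(b^2)/2))
        = (2/3) * Real.exp (2 + -(b^2)/2) := by
      rw [Real.exp_add]
      field_simp
    rw [this]
    have hbsq : b^2 ≤ 4 := by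
      have h1 := hb.1; have h2 := hb.2
      nlinarith
    have hexp : (1:ℝ) ≤ Real.exp (2 + -(b^2)/2) := by
      rw [← Real.exp_zero]
      exact Real.exp_le_exp.mpr (by linarith)
    nlinarith
  · rw [if_neg hb]
    simp
    positivity

/-- There exists `v(a,b)` supported on `{-1,1} × [0,2]`, uniformly bounded by an
absolute constant, such that for every `|x| ≤ 1`,
`E_{a ~ Unif{±1}, b ~ N(0,1)}[v(a,b) · ReLU(a·x + b)] = 1`.
The expectation over `a` is written out as the average of the values at `a = 1` and `a = -1`. -/
theorem stmt0 :
    ∃ (C : ℝ) (v : ℝ → ℝ → ℝ), 0 < C ∧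
      (∀ a b : ℝ, b ∉ Set.Icc (0 : ℝ) 2 → v a b = 0) ∧
      (∀ a b : ℝ, |v a b| ≤ C) ∧
      (∀ x : ℝ, |x| ≤ 1 →
        (∫ b, (v 1 b * max (x + b) 0 + v (-1) b * max (-x + b) 0) / 2
          ∂(gaussianReal 0 1)) = 1) := by
  refine ⟨(2/3) * Real.sqrt (2*π) * Real.exp 2, fun _ b => vv b, by positivity, ?_, ?_, ?_⟩
  · intro a b hb
    have : b ∉ Set.Icc (1:ℝ) 2 := by
      intro h; exact hb ⟨by linarith [h.1], h.2⟩
    simp [vv, this]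
  · intro a b; exact vv_bound b
  · intro x hx; exact vv_integral x hx
end

section
/- Let a be uniform on {-1,1} and b ~ N(0,1). There exists a function v(a,b) supported on {-1,1} × [0,2] with sup|v| bounded by an absolute constant, such that for every x with |x| ≤ 1, E_{a,b}[v(a,b) · ReLU(a·x + b)] = x. -/
open MeasureTheory ProbabilityTheory Real

/-! Take `v(a, b) = sign a / γ([1, 2])` for `b ∈ [1, 2]` and `v = 0` otherwise, where `γ` is the
standard Gaussian. For `b ≥ 1 ≥ |x|` both ReLUs are active, so
`ReLU(x + b) - ReLU(-x + b) = 2x`, and averaging over `a` and `b` returns exactly `x`. -/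

lemma max_add_zero_sub_max_neg_add_zero {x b : ℝ} (hxb : |x| ≤ b) :
    max (x + b) 0 - max (-x + b) 0 = 2 * x := by
  rw [max_eq_left (by linarith [neg_abs_le x]), max_eq_left (by linarith [le_abs_self x])]
  ring

lemma abs_sign_le_one (r : ℝ) : |Real.sign r| ≤ 1 := by
  rcases Real.sign_apply_eq r with h | h | h <;> simp [h]

lemma gaussianReal_real_Icc_pos (m : ℝ) {v : NNReal} (hv : v ≠ 0) {s t : ℝ} (hst : s < t) :
    0 < (gaussianReal m v).real (Set.Icc s t) := by
  refine ENNReal.toReal_pos (fun h => ?_) (measure_ne_top _ _)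
  have := gaussianReal_absolutelyContinuous' m hv h
  simp only [Real.volume_Icc, ENNReal.ofReal_eq_zero, tsub_nonpos] at this
  exact hst.not_ge this

noncomputable def signedBump (c : ℝ) (a b : ℝ) : ℝ :=
  Real.sign a * (Set.Icc (1 : ℝ) 2).indicator (fun _ => c) b

lemma signedBump_eq_zero_of_notMem (c a : ℝ) {b : ℝ} (hb : b ∉ Set.Icc (1 : ℝ) 2) :
    signedBump c a b = 0 := by
  rw [signedBump, Set.indicator_of_notMem hb, mul_zero]

lemma abs_signedBump_le (c a b : ℝ) : |signedBump c a b| ≤ |c| := by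
  rw [signedBump, abs_mul]
  calc |Real.sign a| * |(Set.Icc (1 : ℝ) 2).indicator (fun _ => c) b|
      ≤ 1 * |c| := by
        refine mul_le_mul (abs_sign_le_one a) ?_ (abs_nonneg _) zero_le_one
        simpa only [Real.norm_eq_abs] using norm_indicator_le_norm_self (fun _ => c) b
    _ = |c| := one_mul _

lemma signedBump_average_relu (c : ℝ) {x : ℝ} (hx : |x| ≤ 1) :
    (fun b => (signedBump c 1 b * max (x + b) 0 + signedBump c (-1) b * max (-x + b) 0) / 2) =
      (Set.Icc (1 : ℝ) 2).indicator (fun _ => c * x) := by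
  funext b
  by_cases hb : b ∈ Set.Icc (1 : ℝ) 2
  · have hrelu := max_add_zero_sub_max_neg_add_zero (hx.trans hb.1)
    simp only [signedBump, Set.indicator_of_mem hb, Real.sign_neg, Real.sign_one]
    linear_combination c / 2 * hrelu
  · rw [signedBump_eq_zero_of_notMem c 1 hb, signedBump_eq_zero_of_notMem c (-1) hb,
      Set.indicator_of_notMem hb]
    ring

/-- There exists `v(a,b)` supported on `{-1,1} × [0,2]`, uniformly bounded by an
absolute constant, such that for every `|x| ≤ 1`,
`E_{a ~ Unif{±1}, b ~ N(0,1)}[v(a,b) · ReLU(a·x + b)] = x`.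
The expectation over `a` is written out as the average of the values at `a = 1` and `a = -1`. -/
theorem stmt1 :
    ∃ (C : ℝ) (v : ℝ → ℝ → ℝ), 0 < C ∧
      (∀ a b : ℝ, b ∉ Set.Icc (0 : ℝ) 2 → v a b = 0) ∧
      (∀ a b : ℝ, |v a b| ≤ C) ∧
      (∀ x : ℝ, |x| ≤ 1 →
        (∫ b, (v 1 b * max (x + b) 0 + v (-1) b * max (-x + b) 0) / 2
          ∂(gaussianReal 0 1)) = x) := by
  set p := (gaussianReal 0 1).real (Set.Icc (1 : ℝ) 2)
  have hp : 0 < p := gaussianReal_real_Icc_pos 0 one_ne_zero one_lt_two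
  refine ⟨p⁻¹, signedBump p⁻¹, inv_pos.2 hp, fun a b hb => ?_, fun a b => ?_, fun x hx => ?_⟩
  · exact signedBump_eq_zero_of_notMem _ _ fun h => hb ⟨zero_le_one.trans h.1, h.2⟩
  · simpa [abs_of_pos hp] using abs_signedBump_le p⁻¹ a b
  · rw [signedBump_average_relu p⁻¹ hx, integral_indicator_const _ measurableSet_Icc,
      smul_eq_mul]
    exact mul_inv_cancel_left₀ hp.ne' x
end

section
/- Let f : [-1,1] → ℝ be twice continuously differentiable, a uniform on {-1,1}, b ~ N(0,1). There exists v(a,b) supported on {-1,1} × [0,2] such that for every x with |x| ≤ 1, E_{a,b}[v(a,b)·ReLU(a·x+b)] = f(x), and sup_{a,b}|v(a,b)| ≤ C · max over k ∈ {0,1,2} and x ∈ [-1,1] of |f^{(k)}(x)|, for an absolute constant C. -/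
/-!
Taylor's formula with integral remainder writes
`f x = f (-1) + f' (-1) (x + 1) + ∫ t in -1..1, f'' t * ReLU (x - t)` on `[-1, 1]`.
For `t ≤ 0` the kernel `ReLU (x - t)` is the feature `ReLU (x + b)` with `b = -t ∈ [0, 1]`;
for `t ≥ 0`, `ReLU (x - t) = ReLU (-x + t) + (x - t)` turns it into the feature `ReLU (-x + b)`
with `b = t`. What is left over is affine in `x`, with coefficients controlled by `f` and `f'` at
`-1, 0, 1`, and is produced by constant weights on `b ∈ (1, 2]`, where both features are affine
in `x`. Dividing this Lebesgue density in `b` by the Gaussian density, which is at least `φ 2` on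
`[0, 2]` (`φ` the standard normal density), gives `v` with `|v| ≤ 8 M / φ 2`.
-/

open MeasureTheory ProbabilityTheory Real

theorem intervalIntegral.integral_ite_le_eq_add {g h : ℝ → ℝ} {a m c : ℝ} (ham : a ≤ m)
    (hmc : m ≤ c) (hg : IntervalIntegrable g volume a m) (hh : IntervalIntegrable h volume m c) :
    ∫ b in a..c, (if b ≤ m then g b else h b) = (∫ b in a..m, g b) + ∫ b in m..c, h b := by
  have hg' : Set.EqOn g (fun b => if b ≤ m then g b else h b) (Set.uIoo a m) := by
    intro b hb
    rw [Set.uIoo_of_le ham] at hb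
    simp [hb.2.le]
  have hh' : Set.EqOn h (fun b => if b ≤ m then g b else h b) (Set.uIoo m c) := by
    intro b hb
    rw [Set.uIoo_of_le hmc] at hb
    simp [hb.1]
  rw [← intervalIntegral.integral_add_adjacent_intervals (hg.congr_uIoo hg') (hh.congr_uIoo hh'),
    intervalIntegral.integral_congr_uIoo hg', intervalIntegral.integral_congr_uIoo hh']

theorem integral_mul_max_sub_zero {g : ℝ → ℝ} (hg : Continuous g) {a b x : ℝ}
    (hax : a ≤ x) (hxb : x ≤ b) :
    ∫ t in a..b, g t * max (x - t) 0 = ∫ t in a..x, g t * (x - t) := by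
  have hint : Continuous fun t => g t * max (x - t) 0 := by fun_prop
  rw [← intervalIntegral.integral_add_adjacent_intervals (hint.intervalIntegrable a x)
      (hint.intervalIntegrable x b),
    intervalIntegral.integral_congr (g := fun t => g t * (x - t)) (fun t ht => ?_),
    intervalIntegral.integral_congr (a := x) (g := fun _ => 0) (fun t ht => ?_),
    intervalIntegral.integral_zero, add_zero]
  · rw [Set.uIcc_of_le hxb] at ht
    simp [max_eq_right (sub_nonpos.mpr ht.1)]
  · rw [Set.uIcc_of_le hax] at ht
    simp [max_eq_left (sub_nonneg.mpr ht.2)]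

theorem gaussianPDFReal_le_of_le {μ : ℝ} {v : NNReal} {b c : ℝ} (hμb : μ ≤ b) (hbc : b ≤ c) :
    gaussianPDFReal μ v c ≤ gaussianPDFReal μ v b := by
  unfold gaussianPDFReal
  gcongr

/-- The factor `2` compensates for averaging over the sign `a`. -/
noncomputable def gaussianReweight (u : ℝ → ℝ → ℝ) (a b : ℝ) : ℝ :=
  (Set.Icc 0 2).indicator (fun b => 2 * u a b / gaussianPDFReal 0 1 b) b

theorem gaussianReweight_of_notMem (u : ℝ → ℝ → ℝ) (a : ℝ) {b : ℝ}
    (hb : b ∉ Set.Icc (0 : ℝ) 2) :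
    gaussianReweight u a b = 0 :=
  Set.indicator_of_notMem hb _

theorem abs_gaussianReweight_le {u : ℝ → ℝ → ℝ} {a K : ℝ}
    (hu : ∀ b ∈ Set.Icc (0 : ℝ) 2, |u a b| ≤ K) (b : ℝ) :
    |gaussianReweight u a b| ≤ 2 / gaussianPDFReal 0 1 2 * K := by
  have hK : 0 ≤ K := (abs_nonneg _).trans (hu 0 (by norm_num))
  have hφ₂ : 0 < gaussianPDFReal 0 1 2 := gaussianPDFReal_pos _ _ _ one_ne_zero
  by_cases hb : b ∈ Set.Icc (0 : ℝ) 2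
  · have hφ : 0 < gaussianPDFReal 0 1 b := gaussianPDFReal_pos _ _ _ one_ne_zero
    rw [gaussianReweight, Set.indicator_of_mem hb, abs_div, abs_mul, abs_two, abs_of_pos hφ]
    calc 2 * |u a b| / gaussianPDFReal 0 1 b ≤ 2 * K / gaussianPDFReal 0 1 2 := by
          gcongr
          exacts [hu b hb, gaussianPDFReal_le_of_le hb.1 hb.2]
      _ = 2 / gaussianPDFReal 0 1 2 * K := by ring
  · rw [gaussianReweight_of_notMem u a hb, abs_zero]
    positivity

theorem integral_gaussianReal_gaussianReweight (u : ℝ → ℝ → ℝ) (r s : ℝ → ℝ) :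
    ∫ b, (gaussianReweight u 1 b * r b + gaussianReweight u (-1) b * s b) / 2 ∂gaussianReal 0 1
      = ∫ b in (0 : ℝ)..2, (u 1 b * r b + u (-1) b * s b) := by
  rw [integral_gaussianReal_eq_integral_smul one_ne_zero,
    intervalIntegral.integral_of_le zero_le_two, ← integral_Icc_eq_integral_Ioc,
    ← integral_indicator measurableSet_Icc]
  congr 1 with b
  by_cases hb : b ∈ Set.Icc (0 : ℝ) 2
  · have hφ : gaussianPDFReal 0 1 b ≠ 0 := (gaussianPDFReal_pos _ _ _ one_ne_zero).ne'
    simp only [gaussianReweight, Set.indicator_of_mem hb, smul_eq_mul]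
    field_simp
  · simp [gaussianReweight, Set.indicator_of_notMem hb]

noncomputable def affineIntercept (f : ℝ → ℝ) : ℝ :=
  f (-1) + deriv f (-1) - deriv f 1 + f 1 - f 0

noncomputable def affineSlope (f : ℝ → ℝ) : ℝ :=
  deriv f (-1) + deriv f 1 - deriv f 0

theorem integral_one_two_relu_affine {x : ℝ} (hx₁ : -1 ≤ x) (hx₂ : x ≤ 1) (p q : ℝ) :
    ∫ b in (1 : ℝ)..2, ((p / 3 + q / 2) * max (x + b) 0 + (p / 3 - q / 2) * max (-x + b) 0)
      = p + q * x := by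
  have hlin : Set.EqOn
      (fun b => (p / 3 + q / 2) * max (x + b) 0 + (p / 3 - q / 2) * max (-x + b) 0)
      (fun b => q * x + 2 * p / 3 * b) (Set.uIcc 1 2) := by
    intro b hb
    rw [Set.uIcc_of_le one_le_two] at hb
    simp only [max_eq_left (by linarith [hb.1] : 0 ≤ x + b),
      max_eq_left (by linarith [hb.1] : 0 ≤ -x + b)]
    ring
  rw [intervalIntegral.integral_congr hlin, intervalIntegral.integral_add intervalIntegrable_const
    (intervalIntegral.intervalIntegrable_id.const_mul _),
    intervalIntegral.integral_const_mul (2 * p / 3), integral_id]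
  norm_num
  ring

/-- Only `a = ±1` enter the representation; `Real.sign a` keeps the density bounded for every
real `a`. On `(1, 2]` both features are
affine in `x`, and since `∫ b in 1..2, b = 3 / 2` the constants integrate to
`affineIntercept f + affineSlope f * x`. -/
noncomputable def reluDensity (f : ℝ → ℝ) (a b : ℝ) : ℝ :=
  if b ≤ 1 then deriv (deriv f) (-(Real.sign a * b))
  else affineIntercept f / 3 + Real.sign a * affineSlope f / 2

section

variable {f : ℝ → ℝ}

theorem integral_deriv_deriv_mul_sub (hf : ContDiff ℝ 2 f) (x a b : ℝ) :
    ∫ t in a..b, deriv (deriv f) t * (x - t)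
      = deriv f b * (x - b) + f b - (deriv f a * (x - a) + f a) := by
  refine intervalIntegral.integral_eq_sub_of_hasDerivAt (f := fun t => deriv f t * (x - t) + f t)
    (fun t _ => ?_) ?_
  · exact (((hf.differentiable_deriv_two t).hasDerivAt.mul ((hasDerivAt_id t).const_sub x)).add
      (hf.differentiable two_ne_zero t).hasDerivAt).congr_deriv (by simp only [id]; ring)
  · exact (hf.deriv'.continuous_deriv_one.mul
      (continuous_const.sub continuous_id)).intervalIntegrable _ _

theorem taylor_relu_integral (hf : ContDiff ℝ 2 f) {a b x : ℝ} (hax : a ≤ x) (hxb : x ≤ b) :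
    f x = f a + deriv f a * (x - a) + ∫ t in a..b, deriv (deriv f) t * max (x - t) 0 := by
  rw [integral_mul_max_sub_zero hf.deriv'.continuous_deriv_one hax hxb,
    integral_deriv_deriv_mul_sub hf]
  ring

theorem integral_zero_one_relu_deriv_deriv (hf : ContDiff ℝ 2 f) {x : ℝ}
    (hx₁ : -1 ≤ x) (hx₂ : x ≤ 1) :
    ∫ b in (0 : ℝ)..1, (deriv (deriv f) (-b) * max (x + b) 0 + deriv (deriv f) b * max (-x + b) 0)
      = f x - (affineIntercept f + affineSlope f * x) := by
  set g := deriv (deriv f)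
  have hg : Continuous g := hf.deriv'.continuous_deriv_one
  have hneg : ∫ b in (0 : ℝ)..1, g (-b) * max (x + b) 0
      = ∫ t in (-1 : ℝ)..0, g t * max (x - t) 0 := by
    simpa using
      intervalIntegral.integral_comp_neg (a := 0) (b := 1) (fun t => g t * max (x - t) 0)
  have hpos : ∫ b in (0 : ℝ)..1, g b * max (-x + b) 0
      = (∫ t in (0 : ℝ)..1, g t * max (x - t) 0) - ∫ t in (0 : ℝ)..1, g t * (x - t) := by
    rw [← intervalIntegral.integral_sub (Continuous.intervalIntegrable (by fun_prop) _ _)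
      (Continuous.intervalIntegrable (by fun_prop) _ _)]
    refine intervalIntegral.integral_congr fun t _ => ?_
    have h := max_zero_sub_max_neg_zero_eq_self (x - t)
    rw [show -(x - t) = -x + t by ring] at h
    linear_combination -g t * h
  rw [intervalIntegral.integral_add (Continuous.intervalIntegrable (by fun_prop) _ _)
      (Continuous.intervalIntegrable (by fun_prop) _ _), hneg, hpos, ← add_sub_assoc,
    intervalIntegral.integral_add_adjacent_intervals
      (Continuous.intervalIntegrable (by fun_prop) _ _)
      (Continuous.intervalIntegrable (by fun_prop) _ _), integral_deriv_deriv_mul_sub hf]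
  have := taylor_relu_integral hf hx₁ hx₂
  unfold affineIntercept affineSlope
  linear_combination -this

theorem integral_relu_reluDensity (hf : ContDiff ℝ 2 f) {x : ℝ}
    (hx₁ : -1 ≤ x) (hx₂ : x ≤ 1) :
    ∫ b in (0 : ℝ)..2,
      (reluDensity f 1 b * max (x + b) 0 + reluDensity f (-1) b * max (-x + b) 0) = f x := by
  have hg : Continuous (deriv (deriv f)) := hf.deriv'.continuous_deriv_one
  have hpiece :
      (fun b => reluDensity f 1 b * max (x + b) 0 + reluDensity f (-1) b * max (-x + b) 0)
      = fun b => if b ≤ 1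
        then deriv (deriv f) (-b) * max (x + b) 0 + deriv (deriv f) b * max (-x + b) 0
        else (affineIntercept f / 3 + affineSlope f / 2) * max (x + b) 0
          + (affineIntercept f / 3 - affineSlope f / 2) * max (-x + b) 0 := by
    funext b
    simp only [reluDensity, Real.sign_one, Real.sign_neg, one_mul, neg_one_mul, neg_neg]
    split_ifs <;> ring
  rw [hpiece, intervalIntegral.integral_ite_le_eq_add zero_le_one one_le_two
    (Continuous.intervalIntegrable (by fun_prop) _ _)
    (Continuous.intervalIntegrable (by fun_prop) _ _),
    integral_zero_one_relu_deriv_deriv hf hx₁ hx₂, integral_one_two_relu_affine hx₁ hx₂]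
  ring

variable {M : ℝ}

theorem abs_affineIntercept_le (hM : ∀ x ∈ Set.Icc (-1 : ℝ) 1, |f x| ≤ M ∧ |deriv f x| ≤ M) :
    |affineIntercept f| ≤ 5 * M := by
  obtain ⟨h₀, -⟩ := hM 0 (by norm_num)
  obtain ⟨h₁, h₁'⟩ := hM 1 (by norm_num)
  obtain ⟨h₂, h₂'⟩ := hM (-1) (by norm_num)
  rw [abs_le] at h₀ h₁ h₁' h₂ h₂' ⊢
  unfold affineIntercept
  constructor <;> linarith

theorem abs_affineSlope_le (hM : ∀ x ∈ Set.Icc (-1 : ℝ) 1, |deriv f x| ≤ M) :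
    |affineSlope f| ≤ 3 * M := by
  have h₀ := hM 0 (by norm_num)
  have h₁ := hM 1 (by norm_num)
  have h₂ := hM (-1) (by norm_num)
  rw [abs_le] at h₀ h₁ h₂ ⊢
  unfold affineSlope
  constructor <;> linarith

theorem abs_reluDensity_le
    (hM : ∀ x ∈ Set.Icc (-1 : ℝ) 1, |f x| ≤ M ∧ |deriv f x| ≤ M ∧ |deriv (deriv f) x| ≤ M)
    (a : ℝ) {b : ℝ} (hb : b ∈ Set.Icc (0 : ℝ) 2) : |reluDensity f a b| ≤ 4 * M := by
  have hM₀ : 0 ≤ M := (abs_nonneg _).trans (hM 0 (by norm_num)).1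
  have hsign : |Real.sign a| ≤ 1 := by
    rcases Real.sign_apply_eq a with h | h | h <;> simp [h]
  unfold reluDensity
  split_ifs with hb₁
  · have harg : -(Real.sign a * b) ∈ Set.Icc (-1 : ℝ) 1 := by
      rw [Set.mem_Icc, ← abs_le, abs_neg, abs_mul, abs_of_nonneg hb.1]
      nlinarith [abs_nonneg (Real.sign a)]
    linarith [(hM _ harg).2.2]
  · have hα := abs_affineIntercept_le fun x hx => ⟨(hM x hx).1, (hM x hx).2.1⟩
    have hβ := abs_affineSlope_le fun x hx => (hM x hx).2.1
    have hsβ : |Real.sign a * affineSlope f| ≤ 3 * M := by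
      rw [abs_mul]
      nlinarith [abs_nonneg (Real.sign a), abs_nonneg (affineSlope f)]
    rw [abs_le] at hα hsβ ⊢
    constructor <;> linarith

end

/-- For any twice continuously differentiable `f`, there exists `v(a,b)` supported on
`{-1,1} × [0,2]` with `E_{a ~ Unif{±1}, b ~ N(0,1)}[v(a,b) · ReLU(a·x + b)] = f(x)` for all
`|x| ≤ 1`, and `sup |v| ≤ C · max_{k ∈ {0,1,2}, x ∈ [-1,1]} |f^{(k)}(x)|` for an absolute
constant `C` (encoded via any bound `M` dominating `|f|, |f'|, |f''|` on `[-1,1]`). -/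
theorem stmt2 :
    ∃ C : ℝ, 0 < C ∧
      ∀ f : ℝ → ℝ, ContDiff ℝ 2 f →
        ∃ v : ℝ → ℝ → ℝ,
          (∀ a b : ℝ, b ∉ Set.Icc (0 : ℝ) 2 → v a b = 0) ∧
          (∀ M : ℝ,
            (∀ x ∈ Set.Icc (-1 : ℝ) 1,
              |f x| ≤ M ∧ |deriv f x| ≤ M ∧ |deriv (deriv f) x| ≤ M) →
            ∀ a b : ℝ, |v a b| ≤ C * M) ∧
          (∀ x : ℝ, |x| ≤ 1 →
            (∫ b, (v 1 b * max (x + b) 0 + v (-1) b * max (-x + b) 0) / 2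
              ∂(gaussianReal 0 1)) = f x) := by
  have hφ₂ : 0 < gaussianPDFReal 0 1 2 := gaussianPDFReal_pos _ _ _ one_ne_zero
  refine ⟨8 / gaussianPDFReal 0 1 2, by positivity, fun f hf => ?_⟩
  refine ⟨gaussianReweight (reluDensity f), fun a b hb => gaussianReweight_of_notMem _ a hb,
    fun M hM a b => ?_, fun x hx => ?_⟩
  · calc |gaussianReweight (reluDensity f) a b|
        ≤ 2 / gaussianPDFReal 0 1 2 * (4 * M) :=
          abs_gaussianReweight_le (fun _ hb => abs_reluDensity_le hM a hb) b
      _ = 8 / gaussianPDFReal 0 1 2 * M := by ring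
  · obtain ⟨hx₁, hx₂⟩ := abs_le.mp hx
    rw [integral_gaussianReal_gaussianReweight (reluDensity f) (fun b => max (x + b) 0)
      (fun b => max (-x + b) 0)]
    exact integral_relu_reluDensity hf hx₁ hx₂
end
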